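/- Keep the notation of the divergence theorem for the IPFP sequence, with modified marginals a' and b'. The two limit matrices L_even = lim_n X_{2n} and L_odd = lim_n X_{2n+1} have the same support Σ, and Σ equals the union of the supports of all matrices in Γ(a',b,X_0) ∪ Γ(a,b',X_0). Moreover, if X'_0 denotes the matrix obtained from X_0 by setting to 0 all entries outside Σ, then the IPFP started from X'_0 (with marginals a and b) has the same limit points: the even subsequence converges to L_even and the odd subsequence converges to L_odd. -/

import Mathlib

open Filter Topology

namespace IPFP

variable {p q : ℕ}

/-- Row sums `X(i,+)`. -/
noncomputable def rowSum (X : Matrix (Fin p) (Fin q) ℝ) (i : Fin p) : ℝ := ∑ j, X i j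

/-- Column sums `X(+,j)`. -/
noncomputable def colSum (X : Matrix (Fin p) (Fin q) ℝ) (j : Fin q) : ℝ := ∑ i, X i j

/-- `R_i(X) = X(i,+)/a_i`. -/
noncomputable def Rrat (a : Fin p → ℝ) (X : Matrix (Fin p) (Fin q) ℝ) (i : Fin p) : ℝ :=
  rowSum X i / a i

/-- `C_j(X) = X(+,j)/b_j`. -/
noncomputable def Crat (b : Fin q → ℝ) (X : Matrix (Fin p) (Fin q) ℝ) (j : Fin q) : ℝ :=
  colSum X j / b j

/-- `T_R(X)(i,j) = X(i,j)/R_i(X)`. -/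
noncomputable def TR (a : Fin p → ℝ) (X : Matrix (Fin p) (Fin q) ℝ) :
    Matrix (Fin p) (Fin q) ℝ :=
  fun i j => X i j / Rrat a X i

/-- `T_C(X)(i,j) = X(i,j)/C_j(X)`. -/
noncomputable def TC (b : Fin q → ℝ) (X : Matrix (Fin p) (Fin q) ℝ) :
    Matrix (Fin p) (Fin q) ℝ :=
  fun i j => X i j / Crat b X j

/-- The IPFP sequence: `X_0 = X0`, `X_{2n+1} = T_R(X_{2n})`, `X_{2n+2} = T_C(X_{2n+1})`. -/
noncomputable def ipfp (a : Fin p → ℝ) (b : Fin q → ℝ) (X0 : Matrix (Fin p) (Fin q) ℝ) :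
    ℕ → Matrix (Fin p) (Fin q) ℝ
  | 0 => X0
  | n + 1 => if Even n then TR a (ipfp a b X0 n) else TC b (ipfp a b X0 n)

/-- Membership in `Γ₀`: nonnegative entries, positive row and column sums. -/
def memGamma0 (X : Matrix (Fin p) (Fin q) ℝ) : Prop :=
  (∀ i j, 0 ≤ X i j) ∧ (∀ i, 0 < rowSum X i) ∧ (∀ j, 0 < colSum X j)

/-- Membership in `Γ₁`: member of `Γ₀` with total sum `1`. -/
def memGamma1 (X : Matrix (Fin p) (Fin q) ℝ) : Prop :=
  memGamma0 X ∧ ∑ i, ∑ j, X i j = 1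

/-- Membership in `Γ(a,b)`: member of `Γ₀` with row marginals `a` and column marginals `b`. -/
def memGamma (a : Fin p → ℝ) (b : Fin q → ℝ) (X : Matrix (Fin p) (Fin q) ℝ) : Prop :=
  memGamma0 X ∧ (∀ i, rowSum X i = a i) ∧ (∀ j, colSum X j = b j)

/-- `Supp(X) ⊆ Supp(Y)`. -/
def suppSubset (X Y : Matrix (Fin p) (Fin q) ℝ) : Prop :=
  ∀ i j, 0 < X i j → 0 < Y i j

/-- Membership in `Γ(a,b,X0)`: member of `Γ(a,b)` with support contained in `Supp(X0)`. -/
def memGammaSub (a : Fin p → ℝ) (b : Fin q → ℝ) (X0 X : Matrix (Fin p) (Fin q) ℝ) : Prop :=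
  memGamma a b X ∧ suppSubset X X0

/-- Relative entropy (I-divergence) `D(Y‖X) = Σ_{(i,j) ∈ Supp X} Y(i,j)·ln(Y(i,j)/X(i,j))`
(finite expression; it agrees with the relative entropy whenever `Supp Y ⊆ Supp X`,
with the convention `0·ln 0 = 0`). -/
noncomputable def relEnt (Y X : Matrix (Fin p) (Fin q) ℝ) : ℝ :=
  ∑ i, ∑ j, if 0 < X i j then Y i j * Real.log (Y i j / X i j) else 0

/-- A real sequence converges to `l` at an at least geometric rate:
it tends to `l` and `limsup_n |x_n − l|^{1/n} < 1`. -/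
noncomputable def geomSeq (x : ℕ → ℝ) (l : ℝ) : Prop :=
  Tendsto x atTop (nhds l) ∧
    Filter.limsup (fun n : ℕ => |x n - l| ^ ((n : ℝ)⁻¹)) atTop < 1

/-- A matrix sequence converges to `L` at an at least geometric rate (using the
`ℓ¹` norm on entries): it tends to `L` and `limsup_n ‖X_n − L‖^{1/n} < 1`. -/
noncomputable def geomMat (X : ℕ → Matrix (Fin p) (Fin q) ℝ)
    (L : Matrix (Fin p) (Fin q) ℝ) : Prop :=
  Tendsto X atTop (nhds L) ∧
    Filter.limsup (fun n : ℕ => (∑ i, ∑ j, |X n i j - L i j|) ^ ((n : ℝ)⁻¹)) atTop < 1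

end IPFP

open IPFP

/-!
Write `D(W‖X)` for the I-divergence. A row or column scaling changes `D(W‖X)` by a sum of
logarithms of the scaling factors weighted by the marginals of `W`. So along the IPFP,
`D(W‖X_{2n}) - D(W'‖X_{2n})` stays constant whenever `W` and `W'` have the same marginals.

`L_even ∈ Γ(a',b,X_0)` and `L_odd = L_even / λ ∈ Γ(a,b',X_0)`. If a matrix `S` in one of these
sets had an entry outside `Σ`, then `D(S‖X_{2n})` would diverge, while the divergence of
`L_even` (resp. `L_odd`) from `X_{2n}` converges.

On `Σ` the row and column limits agree, `λ_i = λ_j`. Hence along the IPFP from `X'_0`,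
`D(L_even‖X'_{2n})` decreases at each double step by at least
`∑ λ_i a_i g(R_i/λ_i)`, where `g(t) = t - 1 - log t ≥ 0`. This forces `R_i(X'_{2n}) → λ_i`.
So every cluster point `M` of `X'_{2n}` has the marginals and the support of `L_even`.
Comparing the two invariants, along `X_{2n}` and along `X'_{2n}`, whose starting matrices
agree on `Σ`, gives `D(M‖L_even) + D(L_even‖M) = 0`, i.e. `M = L_even`.
-/

open InformationTheory

namespace IPFP

variable {p q : ℕ} {a : Fin p → ℝ} {b : Fin q → ℝ}

lemma mul_klFun_div {x : ℝ} (y : ℝ) (hx : x ≠ 0) :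
    x * klFun (y / x) = y * Real.log (y / x) + x - y := by
  rw [klFun_apply]
  field_simp

lemma sub_le_mul_log_div {x y : ℝ} (hx : 0 < x) (hy : 0 ≤ y) :
    y - x ≤ y * Real.log (y / x) := by
  have := mul_nonneg hx.le (klFun_nonneg (div_nonneg hy hx.le))
  rw [mul_klFun_div y hx.ne'] at this
  linarith

lemma eq_of_mul_log_div_eq_sub {x y : ℝ} (hx : 0 < x) (hy : 0 ≤ y)
    (h : y * Real.log (y / x) = y - x) : y = x := by
  have h0 : x * klFun (y / x) = 0 := by rw [mul_klFun_div y hx.ne']; linarith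
  have := (klFun_eq_zero_iff (div_nonneg hy hx.le)).mp
    ((mul_eq_zero.mp h0).resolve_left hx.ne')
  rwa [div_eq_one_iff_eq hx.ne'] at this

lemma log_le_div_sub_one_add_log {x c : ℝ} (hx : 0 < x) (hc : 0 < c) :
    Real.log x ≤ x / c - 1 + Real.log c := by
  have := Real.log_le_sub_one_of_pos (div_pos hx hc)
  rw [Real.log_div hx.ne' hc.ne'] at this
  linarith

lemma sub_one_sub_log_nonneg {t : ℝ} (ht : 0 < t) : 0 ≤ t - 1 - Real.log t := by
  linarith [Real.log_le_sub_one_of_pos ht]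

lemma sq_sqrt_sub_one_le {t : ℝ} (ht : 0 < t) :
    (Real.sqrt t - 1) ^ 2 ≤ t - 1 - Real.log t := by
  have h1 := Real.log_le_sub_one_of_pos (Real.sqrt_pos.mpr ht)
  rw [Real.log_sqrt ht.le] at h1
  nlinarith [Real.sq_sqrt ht.le]

lemma tendsto_one_of_tendsto_sub_one_sub_log {t : ℕ → ℝ} (ht : ∀ n, 0 < t n)
    (h : Tendsto (fun n => t n - 1 - Real.log (t n)) atTop (𝓝 0)) :
    Tendsto t atTop (𝓝 1) := by
  have hsq : Tendsto (fun n => (Real.sqrt (t n) - 1) ^ 2) atTop (𝓝 0) :=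
    squeeze_zero (fun n => sq_nonneg _) (fun n => sq_sqrt_sub_one_le (ht n)) h
  have hsqrt : Tendsto (fun n => Real.sqrt (t n)) atTop (𝓝 1) := by
    have := (Real.continuous_sqrt.tendsto 0).comp hsq
    simp only [Function.comp_def, Real.sqrt_sq_eq_abs, Real.sqrt_zero] at this
    simpa using ((tendsto_zero_iff_abs_tendsto_zero _).mpr this).add_const 1
  simpa [Real.mul_self_sqrt (ht _).le] using hsqrt.mul hsqrt

lemma sum_sum_eq_sum_rowSum (X : Matrix (Fin p) (Fin q) ℝ) :
    ∑ i, ∑ j, X i j = ∑ i, rowSum X i := rfl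

lemma sum_sum_eq_sum_colSum (X : Matrix (Fin p) (Fin q) ℝ) :
    ∑ i, ∑ j, X i j = ∑ j, colSum X j := Finset.sum_comm

lemma apply_le_sum_sum {f : Fin p → Fin q → ℝ} (hf : ∀ i j, 0 ≤ f i j) (i : Fin p) (j : Fin q) :
    f i j ≤ ∑ i, ∑ j, f i j :=
  (Finset.single_le_sum (fun j _ => hf i j) (Finset.mem_univ j)).trans
    (Finset.single_le_sum (f := fun i => ∑ j, f i j)
      (fun i _ => Finset.sum_nonneg fun j _ => hf i j) (Finset.mem_univ i))

lemma mul_Rrat {X : Matrix (Fin p) (Fin q) ℝ} {i : Fin p} (hai : a i ≠ 0) :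
    a i * Rrat a X i = rowSum X i := mul_div_cancel₀ _ hai

lemma mul_Crat {X : Matrix (Fin p) (Fin q) ℝ} {j : Fin q} (hbj : b j ≠ 0) :
    b j * Crat b X j = colSum X j := mul_div_cancel₀ _ hbj

lemma Rrat_pos {X : Matrix (Fin p) (Fin q) ℝ} (ha : ∀ i, 0 < a i) (hX : memGamma0 X) (i : Fin p) :
    0 < Rrat a X i := div_pos (hX.2.1 i) (ha i)

lemma Crat_pos {X : Matrix (Fin p) (Fin q) ℝ} (hb : ∀ j, 0 < b j) (hX : memGamma0 X) (j : Fin q) :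
    0 < Crat b X j := div_pos (hX.2.2 j) (hb j)

lemma eq_zero_of_not_pos {X : Matrix (Fin p) (Fin q) ℝ} (hX : ∀ i j, 0 ≤ X i j) {i : Fin p}
    {j : Fin q} (h : ¬ 0 < X i j) : X i j = 0 :=
  le_antisymm (not_lt.mp h) (hX i j)

lemma memGamma0_of_supp {X Y : Matrix (Fin p) (Fin q) ℝ} (hX : memGamma0 X)
    (hY : ∀ i j, 0 ≤ Y i j) (hXY : suppSubset X Y) : memGamma0 Y := by
  refine ⟨hY, fun i => ?_, fun j => ?_⟩
  · obtain ⟨j, -, hj⟩ :=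
      Finset.exists_lt_of_sum_lt (f := 0) (g := X i) (by simpa [rowSum] using hX.2.1 i)
    exact Finset.sum_pos' (fun j _ => hY i j) ⟨j, Finset.mem_univ j, hXY i j hj⟩
  · obtain ⟨i, -, hi⟩ := Finset.exists_lt_of_sum_lt (f := 0) (g := fun i => X i j)
      (by simpa [colSum] using hX.2.2 j)
    exact Finset.sum_pos' (fun i _ => hY i j) ⟨i, Finset.mem_univ i, hXY i j hi⟩

section Scaling

variable {X : Matrix (Fin p) (Fin q) ℝ}

lemma rowSum_TR (hX : memGamma0 X) (i : Fin p) : rowSum (TR a X) i = a i := by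
  simp only [rowSum, TR]
  rw [← Finset.sum_div, ← rowSum, Rrat, div_div_cancel₀ (hX.2.1 i).ne']

lemma colSum_TC (hX : memGamma0 X) (j : Fin q) : colSum (TC b X) j = b j := by
  simp only [colSum, TC]
  rw [← Finset.sum_div, ← colSum, Crat, div_div_cancel₀ (hX.2.2 j).ne']

lemma TR_pos_iff (ha : ∀ i, 0 < a i) (hX : memGamma0 X) (i : Fin p) (j : Fin q) :
    0 < TR a X i j ↔ 0 < X i j :=
  div_pos_iff_of_pos_right (Rrat_pos ha hX i)

lemma TC_pos_iff (hb : ∀ j, 0 < b j) (hX : memGamma0 X) (i : Fin p) (j : Fin q) :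
    0 < TC b X i j ↔ 0 < X i j :=
  div_pos_iff_of_pos_right (Crat_pos hb hX j)

lemma memGamma0_TR (ha : ∀ i, 0 < a i) (hX : memGamma0 X) : memGamma0 (TR a X) :=
  memGamma0_of_supp hX (fun i j => div_nonneg (hX.1 i j) (Rrat_pos ha hX i).le)
    fun i j => (TR_pos_iff ha hX i j).mpr

lemma memGamma0_TC (hb : ∀ j, 0 < b j) (hX : memGamma0 X) : memGamma0 (TC b X) :=
  memGamma0_of_supp hX (fun i j => div_nonneg (hX.1 i j) (Crat_pos hb hX j).le)
    fun i j => (TC_pos_iff hb hX i j).mpr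

end Scaling

section Iterates

variable {Z0 : Matrix (Fin p) (Fin q) ℝ}

lemma ipfp_two_mul_add_one (n : ℕ) : ipfp a b Z0 (2 * n + 1) = TR a (ipfp a b Z0 (2 * n)) := by
  rw [ipfp, if_pos (even_two_mul n)]

lemma ipfp_two_mul_add_two (n : ℕ) :
    ipfp a b Z0 (2 * n + 2) = TC b (ipfp a b Z0 (2 * n + 1)) := by
  rw [ipfp, if_neg (by simp [parity_simps])]

variable (ha : ∀ i, 0 < a i) (hb : ∀ j, 0 < b j) (hZ0 : memGamma0 Z0)
include ha hb hZ0

lemma memGamma0_ipfp_and_pos_iff (n : ℕ) :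
    memGamma0 (ipfp a b Z0 n) ∧ ∀ i j, 0 < ipfp a b Z0 n i j ↔ 0 < Z0 i j := by
  induction n with
  | zero => exact ⟨hZ0, fun i j => Iff.rfl⟩
  | succ n ih =>
    rw [ipfp]
    split_ifs
    · exact ⟨memGamma0_TR ha ih.1, fun i j => (TR_pos_iff ha ih.1 i j).trans (ih.2 i j)⟩
    · exact ⟨memGamma0_TC hb ih.1, fun i j => (TC_pos_iff hb ih.1 i j).trans (ih.2 i j)⟩

lemma memGamma0_ipfp (n : ℕ) : memGamma0 (ipfp a b Z0 n) :=
  (memGamma0_ipfp_and_pos_iff ha hb hZ0 n).1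

lemma ipfp_pos_iff (n : ℕ) (i : Fin p) (j : Fin q) : 0 < ipfp a b Z0 n i j ↔ 0 < Z0 i j :=
  (memGamma0_ipfp_and_pos_iff ha hb hZ0 n).2 i j

lemma rowSum_ipfp_two_mul_add_one (n : ℕ) (i : Fin p) :
    rowSum (ipfp a b Z0 (2 * n + 1)) i = a i := by
  rw [ipfp_two_mul_add_one, rowSum_TR (memGamma0_ipfp ha hb hZ0 _)]

lemma colSum_ipfp_two_mul_add_two (n : ℕ) (j : Fin q) :
    colSum (ipfp a b Z0 (2 * n + 2)) j = b j := by
  rw [ipfp_two_mul_add_two, colSum_TC (memGamma0_ipfp ha hb hZ0 _)]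

lemma sum_ipfp_two_mul_add_two (n : ℕ) : ∑ i, ∑ j, ipfp a b Z0 (2 * n + 2) i j = ∑ j, b j := by
  rw [sum_sum_eq_sum_colSum]
  exact Finset.sum_congr rfl fun j _ => colSum_ipfp_two_mul_add_two ha hb hZ0 n j

end Iterates

section RelEnt

variable {W X : Matrix (Fin p) (Fin q) ℝ}

lemma relEnt_div (hW : ∀ i j, 0 ≤ W i j) (hWX : suppSubset W X) {F : Matrix (Fin p) (Fin q) ℝ}
    (hF : ∀ i j, 0 < F i j) :
    relEnt W (fun i j => X i j / F i j) = relEnt W X + ∑ i, ∑ j, W i j * Real.log (F i j) := by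
  simp only [relEnt, ← Finset.sum_add_distrib]
  refine Finset.sum_congr rfl fun i _ => Finset.sum_congr rfl fun j _ => ?_
  simp only [div_pos_iff_of_pos_right (hF i j)]
  rcases (hW i j).eq_or_lt with h | h
  · simp [← h]
  · have hx := hWX i j h
    rw [if_pos hx, if_pos hx, div_div_eq_mul_div, mul_div_right_comm,
      Real.log_mul (div_pos h hx).ne' (hF i j).ne', mul_add]

lemma relEnt_TR (ha : ∀ i, 0 < a i) (hX : memGamma0 X) (hW : ∀ i j, 0 ≤ W i j)
    (hWX : suppSubset W X) :
    relEnt W (TR a X) = relEnt W X + ∑ i, rowSum W i * Real.log (Rrat a X i) := by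
  change relEnt W (fun i j => X i j / Rrat a X i) = _
  rw [relEnt_div hW hWX (F := fun i _ => Rrat a X i) fun i _ => Rrat_pos ha hX i]
  simp only [rowSum, Finset.sum_mul]

lemma relEnt_TC (hb : ∀ j, 0 < b j) (hX : memGamma0 X) (hW : ∀ i j, 0 ≤ W i j)
    (hWX : suppSubset W X) :
    relEnt W (TC b X) = relEnt W X + ∑ j, colSum W j * Real.log (Crat b X j) := by
  change relEnt W (fun i j => X i j / Crat b X j) = _
  rw [relEnt_div hW hWX (F := fun _ j => Crat b X j) fun _ j => Crat_pos hb hX j]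
  simp only [colSum, Finset.sum_mul]
  rw [Finset.sum_comm]

lemma relEnt_self (W : Matrix (Fin p) (Fin q) ℝ) : relEnt W W = 0 :=
  Finset.sum_eq_zero fun i _ => Finset.sum_eq_zero fun j _ => by
    split_ifs with h
    · rw [div_self h.ne', Real.log_one, mul_zero]
    · rfl

lemma sub_le_relEnt_apply (hW : ∀ i j, 0 ≤ W i j) (hX : ∀ i j, 0 ≤ X i j)
    (hWX : suppSubset W X) (i : Fin p) (j : Fin q) :
    W i j - X i j ≤ if 0 < X i j then W i j * Real.log (W i j / X i j) else 0 := by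
  split_ifs with h
  · exact sub_le_mul_log_div h (hW i j)
  · rw [eq_zero_of_not_pos hX h, eq_zero_of_not_pos hW (mt (hWX i j) h), sub_zero]

lemma sum_sub_sum_le_relEnt (hW : ∀ i j, 0 ≤ W i j) (hX : ∀ i j, 0 ≤ X i j)
    (hWX : suppSubset W X) : ∑ i, ∑ j, W i j - ∑ i, ∑ j, X i j ≤ relEnt W X := by
  simp only [← Finset.sum_sub_distrib]
  exact Finset.sum_le_sum fun i _ => Finset.sum_le_sum fun j _ =>
    sub_le_relEnt_apply hW hX hWX i j

lemma relEnt_nonneg (hW : ∀ i j, 0 ≤ W i j) (hX : ∀ i j, 0 ≤ X i j) (hWX : suppSubset W X)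
    (hsum : ∑ i, ∑ j, W i j = ∑ i, ∑ j, X i j) : 0 ≤ relEnt W X := by
  linarith [sum_sub_sum_le_relEnt hW hX hWX]

lemma eq_of_relEnt_eq_zero (hW : ∀ i j, 0 ≤ W i j) (hX : ∀ i j, 0 ≤ X i j)
    (hWX : suppSubset W X) (hsum : ∑ i, ∑ j, W i j = ∑ i, ∑ j, X i j) (h0 : relEnt W X = 0) :
    W = X := by
  set d : Fin p → Fin q → ℝ := fun i j =>
    (if 0 < X i j then W i j * Real.log (W i j / X i j) else 0) - (W i j - X i j)
  have hd : ∀ i j, 0 ≤ d i j := fun i j => sub_nonneg.mpr (sub_le_relEnt_apply hW hX hWX i j)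
  have hsd : ∑ i, ∑ j, d i j = 0 := by
    simp only [d, Finset.sum_sub_distrib]
    rw [← relEnt, h0, hsum, sub_self, sub_zero]
  have hd0 : ∀ i j, d i j = 0 := fun i j =>
    (Finset.sum_eq_zero_iff_of_nonneg fun j _ => hd i j).mp
      ((Finset.sum_eq_zero_iff_of_nonneg fun i _ => Finset.sum_nonneg fun j _ => hd i j).mp
        hsd i (Finset.mem_univ i)) j (Finset.mem_univ j)
  ext i j
  by_cases hx : 0 < X i j
  · have := hd0 i j
    simp only [d, if_pos hx] at this
    exact eq_of_mul_log_div_eq_sub hx (hW i j) (by linarith)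
  · rw [eq_zero_of_not_pos hX hx, eq_zero_of_not_pos hW (mt (hWX i j) hx)]

lemma mul_log_div_sub_sum_le_relEnt (hW : ∀ i j, 0 ≤ W i j) (hX : ∀ i j, 0 ≤ X i j)
    (hWX : suppSubset W X) {i : Fin p} {j : Fin q} (hx : 0 < X i j) :
    W i j * Real.log (W i j / X i j) - ∑ i, ∑ j, X i j ≤ relEnt W X := by
  set t : Fin p → Fin q → ℝ := fun i j =>
    (if 0 < X i j then W i j * Real.log (W i j / X i j) else 0) + X i j
  have ht : ∀ i j, 0 ≤ t i j := fun i j => by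
    linarith [sub_le_relEnt_apply hW hX hWX i j, hW i j]
  have hsingle := apply_le_sum_sum ht i j
  have hsum : ∑ i, ∑ j, t i j = relEnt W X + ∑ i, ∑ j, X i j := by
    simp only [t, relEnt, Finset.sum_add_distrib]
  simp only [t, if_pos hx] at hsingle
  linarith [hX i j]

lemma tendsto_relEnt {Z : ℕ → Matrix (Fin p) (Fin q) ℝ} {L : Matrix (Fin p) (Fin q) ℝ}
    (hZ : Tendsto Z atTop (𝓝 L)) (hW : ∀ i j, 0 ≤ W i j) (hWL : suppSubset W L) :
    Tendsto (fun n => relEnt W (Z n)) atTop (𝓝 (relEnt W L)) := by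
  refine tendsto_finsetSum _ fun i _ => tendsto_finsetSum _ fun j _ => ?_
  have hZij : Tendsto (fun n => Z n i j) atTop (𝓝 (L i j)) := (hZ.apply_nhds i).apply_nhds j
  rcases (hW i j).eq_or_lt with h | h
  · simp [← h]
  · have hL := hWL i j h
    rw [if_pos hL]
    refine Tendsto.congr' ?_ (tendsto_const_nhds.mul
      ((Real.continuousAt_log (div_pos h hL).ne').tendsto.comp
        (tendsto_const_nhds.div hZij hL.ne')))
    filter_upwards [hZij.eventually (eventually_gt_nhds hL)] with n hn
    rw [if_pos hn]
    rfl

lemma tendsto_relEnt_atTop {Z : ℕ → Matrix (Fin p) (Fin q) ℝ} {L : Matrix (Fin p) (Fin q) ℝ}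
    (hZ : Tendsto Z atTop (𝓝 L)) (hZ0 : ∀ n i j, 0 ≤ Z n i j) (hW : ∀ i j, 0 ≤ W i j)
    (hWZ : ∀ n, suppSubset W (Z n)) {i : Fin p} {j : Fin q} (hWij : 0 < W i j)
    (hLij : L i j = 0) : Tendsto (fun n => relEnt W (Z n)) atTop atTop := by
  have hZij : Tendsto (fun n => Z n i j) atTop (𝓝[>] 0) :=
    tendsto_nhdsWithin_iff.mpr
      ⟨hLij ▸ (hZ.apply_nhds i).apply_nhds j, Eventually.of_forall fun n => hWZ n i j hWij⟩
  have hlog : Tendsto (fun n => W i j * Real.log (W i j / Z n i j)) atTop atTop := by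
    refine Tendsto.const_mul_atTop hWij (Real.tendsto_log_atTop.comp ?_)
    simpa only [div_eq_mul_inv, Function.comp_def] using
      (tendsto_inv_nhdsGT_zero.comp hZij).const_mul_atTop hWij
  have hsum : Tendsto (fun n => ∑ i, ∑ j, Z n i j) atTop (𝓝 (∑ i, ∑ j, L i j)) :=
    tendsto_finsetSum _ fun i _ => tendsto_finsetSum _ fun j _ =>
      (hZ.apply_nhds i).apply_nhds j
  refine tendsto_atTop_mono (fun n => ?_) (hlog.atTop_add hsum.neg)
  exact mul_log_div_sub_sum_le_relEnt hW (hZ0 n) (hWZ n) (hWZ n i j hWij)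

end RelEnt

section Convergence

variable {Z : ℕ → Matrix (Fin p) (Fin q) ℝ} {M : Matrix (Fin p) (Fin q) ℝ}

lemma tendsto_rowSum (hZ : Tendsto Z atTop (𝓝 M)) (i : Fin p) :
    Tendsto (fun n => rowSum (Z n) i) atTop (𝓝 (rowSum M i)) :=
  tendsto_finsetSum _ fun j _ => (hZ.apply_nhds i).apply_nhds j

lemma tendsto_colSum (hZ : Tendsto Z atTop (𝓝 M)) (j : Fin q) :
    Tendsto (fun n => colSum (Z n) j) atTop (𝓝 (colSum M j)) :=
  tendsto_finsetSum _ fun i _ => (hZ.apply_nhds i).apply_nhds j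

lemma rowSum_eq_of_tendsto (hZ : Tendsto Z atTop (𝓝 M)) {i : Fin p} {c : ℝ}
    (h : ∀ᶠ n in atTop, rowSum (Z n) i = c) : rowSum M i = c :=
  tendsto_nhds_unique (tendsto_rowSum hZ i) (tendsto_const_nhds.congr' (h.mono fun _ => Eq.symm))

lemma colSum_eq_of_tendsto (hZ : Tendsto Z atTop (𝓝 M)) {j : Fin q} {c : ℝ}
    (h : ∀ᶠ n in atTop, colSum (Z n) j = c) : colSum M j = c :=
  tendsto_nhds_unique (tendsto_colSum hZ j) (tendsto_const_nhds.congr' (h.mono fun _ => Eq.symm))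

lemma rowSum_eq_of_tendsto_Rrat (hZ : Tendsto Z atTop (𝓝 M)) {i : Fin p} (hai : a i ≠ 0)
    {c : ℝ} (h : Tendsto (fun n => Rrat a (Z n) i) atTop (𝓝 c)) : rowSum M i = c * a i :=
  tendsto_nhds_unique (tendsto_rowSum hZ i)
    ((h.mul_const (a i)).congr fun n => by rw [mul_comm, mul_Rrat hai])

lemma colSum_eq_of_tendsto_Crat (hZ : Tendsto Z atTop (𝓝 M)) {j : Fin q} (hbj : b j ≠ 0)
    {c : ℝ} (h : Tendsto (fun n => Crat b (Z n) j) atTop (𝓝 c)) : colSum M j = c * b j :=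
  tendsto_nhds_unique (tendsto_colSum hZ j)
    ((h.mul_const (b j)).congr fun n => by rw [mul_comm, mul_Crat hbj])

end Convergence

section RelEntIterates

variable {Z0 : Matrix (Fin p) (Fin q) ℝ} (ha : ∀ i, 0 < a i) (hb : ∀ j, 0 < b j)
  (hZ0 : memGamma0 Z0)
include ha hb hZ0

lemma nonneg_of_tendsto_ipfp {σ : ℕ → ℕ} {M : Matrix (Fin p) (Fin q) ℝ}
    (hM : Tendsto (fun k => ipfp a b Z0 (σ k)) atTop (𝓝 M)) (i : Fin p) (j : Fin q) :
    0 ≤ M i j :=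
  ge_of_tendsto ((hM.apply_nhds i).apply_nhds j)
    (Eventually.of_forall fun k => (memGamma0_ipfp ha hb hZ0 (σ k)).1 i j)

lemma suppSubset_of_tendsto_ipfp {σ : ℕ → ℕ} {M : Matrix (Fin p) (Fin q) ℝ}
    (hM : Tendsto (fun k => ipfp a b Z0 (σ k)) atTop (𝓝 M)) : suppSubset M Z0 := fun i j h =>
  have ⟨k, hk⟩ := (((hM.apply_nhds i).apply_nhds j).eventually (eventually_gt_nhds h)).exists
  (ipfp_pos_iff ha hb hZ0 (σ k) i j).mp hk

lemma relEnt_ipfp_two_mul_add_two {W : Matrix (Fin p) (Fin q) ℝ} (hW : ∀ i j, 0 ≤ W i j)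
    (hWZ : suppSubset W Z0) (n : ℕ) :
    relEnt W (ipfp a b Z0 (2 * n + 2)) = relEnt W (ipfp a b Z0 (2 * n))
      + ∑ i, rowSum W i * Real.log (Rrat a (ipfp a b Z0 (2 * n)) i)
      + ∑ j, colSum W j * Real.log (Crat b (ipfp a b Z0 (2 * n + 1)) j) := by
  have hsupp : ∀ m, suppSubset W (ipfp a b Z0 m) := fun m i j h =>
    (ipfp_pos_iff ha hb hZ0 m i j).mpr (hWZ i j h)
  rw [ipfp_two_mul_add_two, relEnt_TC hb (memGamma0_ipfp ha hb hZ0 _) hW (hsupp _),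
    ipfp_two_mul_add_one, relEnt_TR ha (memGamma0_ipfp ha hb hZ0 _) hW (hsupp _)]

section Marginals

variable {W W' : Matrix (Fin p) (Fin q) ℝ} (hW : ∀ i j, 0 ≤ W i j) (hW' : ∀ i j, 0 ≤ W' i j)
  (hWZ : suppSubset W Z0) (hW'Z : suppSubset W' Z0)
  (hrow : ∀ i, rowSum W i = rowSum W' i) (hcol : ∀ j, colSum W j = colSum W' j)
include hW hW' hWZ hW'Z hrow hcol

lemma relEnt_sub_relEnt_ipfp (n : ℕ) :
    relEnt W (ipfp a b Z0 (2 * n)) - relEnt W' (ipfp a b Z0 (2 * n))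
      = relEnt W Z0 - relEnt W' Z0 := by
  induction n with
  | zero => rfl
  | succ n ih =>
    rw [← ih, mul_add_one, relEnt_ipfp_two_mul_add_two ha hb hZ0 hW hWZ,
      relEnt_ipfp_two_mul_add_two ha hb hZ0 hW' hW'Z]
    simp only [hrow, hcol]
    ring

lemma relEnt_sub_relEnt_eq_of_tendsto {σ : ℕ → ℕ} {M : Matrix (Fin p) (Fin q) ℝ}
    (hM : Tendsto (fun k => ipfp a b Z0 (2 * σ k)) atTop (𝓝 M)) (hWM : suppSubset W M)
    (hW'M : suppSubset W' M) :
    relEnt W Z0 - relEnt W' Z0 = relEnt W M - relEnt W' M :=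
  tendsto_nhds_unique
    (tendsto_const_nhds.congr fun k =>
      (relEnt_sub_relEnt_ipfp ha hb hZ0 hW hW' hWZ hW'Z hrow hcol (σ k)).symm)
    ((tendsto_relEnt hM hW hWM).sub (tendsto_relEnt hM hW' hW'M))

lemma suppSubset_limit_of_marginals {L : Matrix (Fin p) (Fin q) ℝ}
    (hL : Tendsto (fun n => ipfp a b Z0 (2 * n)) atTop (𝓝 L)) (hW'L : suppSubset W' L) :
    suppSubset W L := by
  intro i j hWij
  by_contra hLij
  have hconv : Tendsto (fun n => relEnt W (ipfp a b Z0 (2 * n))) atTop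
      (𝓝 (relEnt W' L + (relEnt W Z0 - relEnt W' Z0))) :=
    ((tendsto_relEnt hL hW' hW'L).add_const _).congr fun n => by
      linarith [relEnt_sub_relEnt_ipfp ha hb hZ0 hW hW' hWZ hW'Z hrow hcol n]
  exact not_tendsto_atTop_of_tendsto_nhds hconv
    (tendsto_relEnt_atTop hL (fun n => (memGamma0_ipfp ha hb hZ0 _).1) hW
      (fun n i j h => (ipfp_pos_iff ha hb hZ0 _ i j).mpr (hWZ i j h)) hWij
      (eq_zero_of_not_pos (nonneg_of_tendsto_ipfp ha hb hZ0 hL) hLij))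

end Marginals

end RelEntIterates

section LimitRatios

variable {Z0 L : Matrix (Fin p) (Fin q) ℝ} {μ : Fin p → ℝ}
  (hL : Tendsto (fun n => ipfp a b Z0 (2 * n)) atTop (𝓝 L))
  (hR : ∀ i, Tendsto (fun n => Rrat a (ipfp a b Z0 (2 * n)) i) atTop (𝓝 (μ i)))
include hL hR

lemma tendsto_ipfp_two_mul_add_one (hμ : ∀ i, 0 < μ i) :
    Tendsto (fun n => ipfp a b Z0 (2 * n + 1)) atTop (𝓝 fun i j => L i j / μ i) := by
  refine tendsto_pi_nhds.mpr fun i => tendsto_pi_nhds.mpr fun j => ?_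
  simp only [ipfp_two_mul_add_one]
  exact ((hL.apply_nhds i).apply_nhds j).div (hR i) (hμ i).ne'

lemma eq_of_limit_pos (hμ : ∀ i, 0 < μ i) {ν : Fin q → ℝ} (hν : ∀ j, 0 < ν j)
    (hC : ∀ j, Tendsto (fun n => Crat b (ipfp a b Z0 (2 * n + 1)) j) atTop (𝓝 (ν j)⁻¹))
    {i : Fin p} {j : Fin q} (hLij : 0 < L i j) : μ i = ν j := by
  have hshift : Tendsto (fun n => ipfp a b Z0 (2 * n + 2) i j) atTop (𝓝 (L i j)) :=
    (hL.apply_nhds i).apply_nhds j |>.comp (tendsto_add_atTop_nat 1)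
  have hstep : Tendsto (fun n => ipfp a b Z0 (2 * n + 2) i j) atTop
      (𝓝 (L i j / μ i / (ν j)⁻¹)) := by
    simp only [ipfp_two_mul_add_two]
    exact (((tendsto_ipfp_two_mul_add_one hL hR hμ).apply_nhds i).apply_nhds j).div (hC j)
      (inv_ne_zero (hν j).ne')
  have h := tendsto_nhds_unique hshift hstep
  field_simp [(hμ i).ne', (hν j).ne'] at h
  exact h

end LimitRatios

noncomputable def rowGap (a μ : Fin p → ℝ) (X : Matrix (Fin p) (Fin q) ℝ) : ℝ :=
  ∑ i, μ i * a i * (Rrat a X i / μ i - 1 - Real.log (Rrat a X i / μ i))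

lemma rowGap_apply_nonneg (ha : ∀ i, 0 < a i) {μ : Fin p → ℝ} (hμ : ∀ i, 0 < μ i)
    {X : Matrix (Fin p) (Fin q) ℝ} (hX : memGamma0 X) (i : Fin p) :
    0 ≤ μ i * a i * (Rrat a X i / μ i - 1 - Real.log (Rrat a X i / μ i)) :=
  mul_nonneg (mul_pos (hμ i) (ha i)).le
    (sub_one_sub_log_nonneg (div_pos (Rrat_pos ha hX i) (hμ i)))

lemma rowGap_nonneg (ha : ∀ i, 0 < a i) {μ : Fin p → ℝ} (hμ : ∀ i, 0 < μ i)
    {X : Matrix (Fin p) (Fin q) ℝ} (hX : memGamma0 X) : 0 ≤ rowGap a μ X :=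
  Finset.sum_nonneg fun i _ => rowGap_apply_nonneg ha hμ hX i

section Restart

variable (ha : ∀ i, 0 < a i) (hb : ∀ j, 0 < b j)
  {L : Matrix (Fin p) (Fin q) ℝ} {μ : Fin p → ℝ} {ν : Fin q → ℝ}
  (hL0 : ∀ i j, 0 ≤ L i j) (hμ : ∀ i, 0 < μ i) (hν : ∀ j, 0 < ν j)
  (hLrow : ∀ i, rowSum L i = μ i * a i) (hLcol : ∀ j, colSum L j = b j)
  (hLμν : ∀ i j, 0 < L i j → μ i = ν j)

include hLrow hLcol in
lemma sum_mul_eq_sum : ∑ i, μ i * a i = ∑ j, b j := by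
  simp only [← hLrow, ← hLcol, ← sum_sum_eq_sum_rowSum, ← sum_sum_eq_sum_colSum]

include hL0 hLrow hLcol hLμν in
lemma sum_mul_log_eq_sum_mul_log :
    ∑ i, μ i * a i * Real.log (μ i) = ∑ j, b j * Real.log (ν j) := by
  calc ∑ i, μ i * a i * Real.log (μ i) = ∑ i, ∑ j, L i j * Real.log (μ i) := by
        simp only [← hLrow, rowSum, Finset.sum_mul]
    _ = ∑ i, ∑ j, L i j * Real.log (ν j) := by
        refine Finset.sum_congr rfl fun i _ => Finset.sum_congr rfl fun j _ => ?_
        by_cases h : 0 < L i j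
        · rw [hLμν i j h]
        · rw [eq_zero_of_not_pos hL0 h, zero_mul, zero_mul]
    _ = ∑ j, b j * Real.log (ν j) := by
        simp only [← hLcol, colSum, Finset.sum_mul]
        exact Finset.sum_comm

include hb hν hLrow hLcol hLμν in
lemma sum_colSum_mul_log_Crat_le {X : Matrix (Fin p) (Fin q) ℝ} (hX : memGamma0 X)
    (hXrow : ∀ i, rowSum X i = a i) (hXL : suppSubset X L) :
    ∑ j, colSum L j * Real.log (Crat b X j) ≤ -∑ j, b j * Real.log (ν j) := by
  have hterm : ∀ j, colSum L j * Real.log (Crat b X j)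
      ≤ ν j * colSum X j - b j - b j * Real.log (ν j) := fun j => by
    have h := log_le_div_sub_one_add_log (Crat_pos hb hX j) (inv_pos.mpr (hν j))
    rw [div_inv_eq_mul, Real.log_inv] at h
    have h' := mul_le_mul_of_nonneg_left h (hb j).le
    rw [hLcol, ← mul_Crat (hb j).ne']
    linarith
  have hswap : ∑ j, ν j * colSum X j = ∑ j, b j :=
    calc ∑ j, ν j * colSum X j = ∑ i, ∑ j, ν j * X i j := by
          simp only [colSum, Finset.mul_sum]
          exact Finset.sum_comm
      _ = ∑ i, ∑ j, μ i * X i j := by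
          refine Finset.sum_congr rfl fun i _ => Finset.sum_congr rfl fun j _ => ?_
          by_cases h : 0 < X i j
          · rw [hLμν i j (hXL i j h)]
          · rw [eq_zero_of_not_pos hX.1 h, mul_zero, mul_zero]
      _ = ∑ i, μ i * rowSum X i := by simp only [rowSum, Finset.mul_sum]
      _ = ∑ j, b j := by simp only [hXrow]; exact sum_mul_eq_sum hLrow hLcol
  calc ∑ j, colSum L j * Real.log (Crat b X j)
      ≤ ∑ j, (ν j * colSum X j - b j - b j * Real.log (ν j)) := Finset.sum_le_sum fun j _ => hterm j
    _ = -∑ j, b j * Real.log (ν j) := by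
        simp only [Finset.sum_sub_distrib, hswap]
        ring

include ha hμ hL0 hLrow hLcol hLμν in
lemma sum_rowSum_mul_log_Rrat_eq {X : Matrix (Fin p) (Fin q) ℝ} (hX : memGamma0 X)
    (hXsum : ∑ i, ∑ j, X i j = ∑ j, b j) :
    ∑ i, rowSum L i * Real.log (Rrat a X i) = ∑ j, b j * Real.log (ν j) - rowGap a μ X := by
  have hterm : ∀ i, μ i * a i * (Rrat a X i / μ i - 1 - Real.log (Rrat a X i / μ i))
      = rowSum X i - μ i * a i + μ i * a i * Real.log (μ i)
        - rowSum L i * Real.log (Rrat a X i) := fun i => by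
    rw [Real.log_div (Rrat_pos ha hX i).ne' (hμ i).ne', hLrow, ← mul_Rrat (ha i).ne']
    field_simp [(hμ i).ne']
    ring
  rw [rowGap, Finset.sum_congr rfl fun i _ => hterm i]
  simp only [Finset.sum_sub_distrib, Finset.sum_add_distrib]
  rw [← sum_sum_eq_sum_rowSum, hXsum, sum_mul_eq_sum hLrow hLcol,
    sum_mul_log_eq_sum_mul_log hL0 hLrow hLcol hLμν]
  ring

variable {Y0 : Matrix (Fin p) (Fin q) ℝ} (hY0 : memGamma0 Y0) (hY0L : ∀ i j, 0 < Y0 i j ↔ 0 < L i j)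
include ha hb hL0 hμ hν hLrow hLcol hLμν hY0 hY0L

/-- Indexed from `n = 1`: only from there on is the total mass of the even iterates `∑ b`. -/
lemma relEnt_ipfp_add_rowGap_le (n : ℕ) :
    relEnt L (ipfp a b Y0 (2 * (n + 2))) + rowGap a μ (ipfp a b Y0 (2 * (n + 1)))
      ≤ relEnt L (ipfp a b Y0 (2 * (n + 1))) := by
  have hsupp : ∀ m, suppSubset (ipfp a b Y0 m) L := fun m i j h =>
    (hY0L i j).mp ((ipfp_pos_iff ha hb hY0 m i j).mp h)
  have hstep := relEnt_ipfp_two_mul_add_two ha hb hY0 hL0 (fun i j h => (hY0L i j).mpr h) (n + 1)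
  rw [sum_rowSum_mul_log_Rrat_eq ha hL0 hμ hLrow hLcol hLμν
    (X := ipfp a b Y0 (2 * (n + 1))) (memGamma0_ipfp ha hb hY0 _)
    (sum_ipfp_two_mul_add_two ha hb hY0 n)] at hstep
  have hcol := sum_colSum_mul_log_Crat_le hb hν hLrow hLcol hLμν (memGamma0_ipfp ha hb hY0 _)
    (rowSum_ipfp_two_mul_add_one ha hb hY0 (n + 1)) (hsupp _)
  change relEnt L (ipfp a b Y0 (2 * (n + 1) + 2)) + _ ≤ _
  linarith

lemma relEnt_ipfp_antitone : Antitone fun n => relEnt L (ipfp a b Y0 (2 * (n + 1))) :=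
  antitone_nat_of_succ_le fun n =>
    (le_add_of_nonneg_right (rowGap_nonneg ha hμ (memGamma0_ipfp ha hb hY0 _))).trans
      (relEnt_ipfp_add_rowGap_le ha hb hL0 hμ hν hLrow hLcol hLμν hY0 hY0L n)

lemma tendsto_rowGap_ipfp :
    Tendsto (fun n => rowGap a μ (ipfp a b Y0 (2 * (n + 1)))) atTop (𝓝 0) := by
  set E : ℕ → ℝ := fun n => relEnt L (ipfp a b Y0 (2 * (n + 1)))
  have hgap := relEnt_ipfp_add_rowGap_le ha hb hL0 hμ hν hLrow hLcol hLμν hY0 hY0L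
  have hgap0 : ∀ n, 0 ≤ rowGap a μ (ipfp a b Y0 (2 * (n + 1))) := fun n =>
    rowGap_nonneg ha hμ (memGamma0_ipfp ha hb hY0 _)
  have hanti : Antitone E := relEnt_ipfp_antitone ha hb hL0 hμ hν hLrow hLcol hLμν hY0 hY0L
  have hE0 : ∀ n, 0 ≤ E n := fun n =>
    relEnt_nonneg hL0 (memGamma0_ipfp ha hb hY0 _).1
      (fun i j h => (ipfp_pos_iff ha hb hY0 _ i j).mpr ((hY0L i j).mpr h))
      (by rw [sum_sum_eq_sum_colSum, Finset.sum_congr rfl fun j _ => hLcol j]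
          exact (sum_ipfp_two_mul_add_two ha hb hY0 n).symm)
  have hE := tendsto_atTop_ciInf hanti ⟨0, by rintro _ ⟨n, rfl⟩; exact hE0 n⟩
  refine squeeze_zero hgap0 (fun n => ?_)
    (by simpa using hE.sub (hE.comp (tendsto_add_atTop_nat 1)))
  have := hgap n
  simp only [E]
  linarith

lemma tendsto_Rrat_ipfp (i : Fin p) :
    Tendsto (fun n => Rrat a (ipfp a b Y0 (2 * n)) i) atTop (𝓝 (μ i)) := by
  rw [← tendsto_add_atTop_iff_nat 1]
  set t : ℕ → ℝ := fun n => Rrat a (ipfp a b Y0 (2 * (n + 1))) i / μ i with ht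
  have hw : 0 < μ i * a i := mul_pos (hμ i) (ha i)
  have hterm : Tendsto (fun n => μ i * a i * (t n - 1 - Real.log (t n))) atTop (𝓝 0) :=
    squeeze_zero (fun n => rowGap_apply_nonneg ha hμ (memGamma0_ipfp ha hb hY0 _) i)
      (fun n => Finset.single_le_sum
        (fun i _ => rowGap_apply_nonneg ha hμ (memGamma0_ipfp ha hb hY0 (2 * (n + 1))) i)
        (Finset.mem_univ i))
      (tendsto_rowGap_ipfp ha hb hL0 hμ hν hLrow hLcol hLμν hY0 hY0L)
  have hg : Tendsto (fun n => t n - 1 - Real.log (t n)) atTop (𝓝 0) := by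
    have h := hterm.const_mul (μ i * a i)⁻¹
    rw [mul_zero] at h
    exact h.congr fun n => by rw [← mul_assoc, inv_mul_cancel₀ hw.ne', one_mul]
  have h1 := (tendsto_one_of_tendsto_sub_one_sub_log
    (fun n => div_pos (Rrat_pos ha (memGamma0_ipfp ha hb hY0 _) i) (hμ i)) hg).const_mul (μ i)
  simpa [ht, mul_div_cancel₀ _ (hμ i).ne'] using h1

end Restart

section RestrictedStart

variable (ha : ∀ i, 0 < a i) (hb : ∀ j, 0 < b j) {X0 : Matrix (Fin p) (Fin q) ℝ}
  (hX0 : memGamma0 X0) {L : Matrix (Fin p) (Fin q) ℝ}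
  (hL : Tendsto (fun n => ipfp a b X0 (2 * n)) atTop (𝓝 L))
  {Y0 : Matrix (Fin p) (Fin q) ℝ} (hY0 : ∀ i j, Y0 i j = if 0 < L i j then X0 i j else 0)

include ha hb hX0 hL hY0 in
lemma restrict_pos_iff (i : Fin p) (j : Fin q) : 0 < Y0 i j ↔ 0 < L i j := by
  rw [hY0]
  split_ifs with h
  · exact iff_of_true (suppSubset_of_tendsto_ipfp ha hb hX0 hL i j h) h
  · exact iff_of_false (lt_irrefl 0) h

include hY0 in
lemma relEnt_restrict {W : Matrix (Fin p) (Fin q) ℝ} (hW : ∀ i j, 0 ≤ W i j)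
    (hWL : suppSubset W L) : relEnt W Y0 = relEnt W X0 := by
  refine Finset.sum_congr rfl fun i _ => Finset.sum_congr rfl fun j _ => ?_
  by_cases h : 0 < L i j
  · rw [hY0, if_pos h]
  · simp [hY0, h, eq_zero_of_not_pos hW (mt (hWL i j) h)]

variable {μ : Fin p → ℝ} {ν : Fin q → ℝ} (hμ : ∀ i, 0 < μ i) (hν : ∀ j, 0 < ν j)
  (hLrow : ∀ i, rowSum L i = μ i * a i) (hLcol : ∀ j, colSum L j = b j)
  (hLμν : ∀ i j, 0 < L i j → μ i = ν j)

include ha hb hX0 hL hY0 hμ hLrow hLcol in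
lemma memGamma0_restrict : memGamma0 Y0 := by
  refine memGamma0_of_supp (X := L) ⟨nonneg_of_tendsto_ipfp ha hb hX0 hL, fun i => ?_, fun j => ?_⟩
    (fun i j => ?_) fun i j => (restrict_pos_iff ha hb hX0 hL hY0 i j).mpr
  · rw [hLrow]; exact mul_pos (hμ i) (ha i)
  · rw [hLcol]; exact hb j
  · rw [hY0]; split_ifs
    exacts [hX0.1 i j, le_rfl]

include ha hb hX0 hL hY0 hμ hν hLrow hLcol hLμν

lemma suppSubset_of_tendsto_ipfp_restrict {ψ : ℕ → ℕ} {M : Matrix (Fin p) (Fin q) ℝ}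
    (hM : Tendsto (fun k => ipfp a b Y0 (2 * (ψ k + 1))) atTop (𝓝 M)) : suppSubset L M := by
  have hY0' := memGamma0_restrict ha hb hX0 hL hY0 hμ hLrow hLcol
  have hY0L := restrict_pos_iff ha hb hX0 hL hY0
  have hL0 := nonneg_of_tendsto_ipfp ha hb hX0 hL
  intro i j hLij
  by_contra hMij
  have hdiv := tendsto_relEnt_atTop hM (fun k => (memGamma0_ipfp ha hb hY0' _).1) hL0
    (fun k i j h => (ipfp_pos_iff ha hb hY0' _ i j).mpr ((hY0L i j).mpr h)) hLij
    (eq_zero_of_not_pos (nonneg_of_tendsto_ipfp ha hb hY0' hM) hMij)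
  obtain ⟨k, hk⟩ := (hdiv.eventually_gt_atTop (relEnt L (ipfp a b Y0 (2 * (0 + 1))))).exists
  exact hk.not_ge
    (relEnt_ipfp_antitone ha hb hL0 hμ hν hLrow hLcol hLμν hY0' hY0L (Nat.zero_le (ψ k)))

lemma eq_of_tendsto_ipfp_restrict {ψ : ℕ → ℕ} (hψ : Tendsto ψ atTop atTop)
    {M : Matrix (Fin p) (Fin q) ℝ}
    (hM : Tendsto (fun k => ipfp a b Y0 (2 * (ψ k + 1))) atTop (𝓝 M)) : M = L := by
  have hY0' := memGamma0_restrict ha hb hX0 hL hY0 hμ hLrow hLcol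
  have hY0L := restrict_pos_iff ha hb hX0 hL hY0
  have hL0 := nonneg_of_tendsto_ipfp ha hb hX0 hL
  have hLX0 := suppSubset_of_tendsto_ipfp ha hb hX0 hL
  have hM0 := nonneg_of_tendsto_ipfp ha hb hY0' hM
  have hML : suppSubset M L := fun i j h =>
    (hY0L i j).mp (suppSubset_of_tendsto_ipfp ha hb hY0' hM i j h)
  have hLM := suppSubset_of_tendsto_ipfp_restrict ha hb hX0 hL hY0 hμ hν hLrow hLcol hLμν hM
  have hrow : ∀ i, rowSum M i = rowSum L i := fun i => by
    rw [hLrow, rowSum_eq_of_tendsto_Rrat hM (ha i).ne'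
      ((tendsto_Rrat_ipfp ha hb hL0 hμ hν hLrow hLcol hLμν hY0' hY0L i).comp
        ((tendsto_add_atTop_nat 1).comp hψ))]
  have hcol : ∀ j, colSum M j = colSum L j := fun j => by
    rw [hLcol, colSum_eq_of_tendsto hM
      (Eventually.of_forall fun k => colSum_ipfp_two_mul_add_two ha hb hY0' (ψ k) j)]
  have hsum : ∑ i, ∑ j, M i j = ∑ i, ∑ j, L i j := by
    simp only [sum_sum_eq_sum_rowSum, hrow]
  have hX := relEnt_sub_relEnt_eq_of_tendsto ha hb hX0 hM0 hL0 (fun i j h => hLX0 i j (hML i j h))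
    hLX0 hrow hcol (σ := id) hL hML fun _ _ h => h
  have hY := relEnt_sub_relEnt_eq_of_tendsto ha hb hY0' hM0 hL0
    (fun i j h => (hY0L i j).mpr (hML i j h)) (fun i j h => (hY0L i j).mpr h) hrow hcol
    (σ := fun k => ψ k + 1) hM (fun _ _ h => h) hLM
  rw [relEnt_restrict hY0 hM0 hML, relEnt_restrict hY0 hL0 fun _ _ h => h,
    relEnt_self] at hY
  rw [relEnt_self] at hX
  exact eq_of_relEnt_eq_zero hM0 hL0 hML hsum
    (by linarith [relEnt_nonneg hM0 hL0 hML hsum, relEnt_nonneg hL0 hM0 hLM hsum.symm])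

lemma tendsto_ipfp_restrict : Tendsto (fun n => ipfp a b Y0 (2 * n)) atTop (𝓝 L) := by
  have hY0' := memGamma0_restrict ha hb hX0 hL hY0 hμ hLrow hLcol
  rw [← tendsto_add_atTop_iff_nat 1]
  have hK : IsCompact (Set.univ.pi fun _ : Fin p => Set.univ.pi fun _ : Fin q =>
      Set.Icc (0 : ℝ) (∑ j, b j)) :=
    isCompact_univ_pi fun _ => isCompact_univ_pi fun _ => isCompact_Icc
  refine hK.tendsto_nhds_of_unique_mapClusterPt (Eventually.of_forall fun n => ?_)
    fun M _ hM => ?_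
  · have hnn := (memGamma0_ipfp ha hb hY0' (2 * (n + 1))).1
    exact Set.mem_univ_pi.mpr fun i => Set.mem_univ_pi.mpr fun j =>
      ⟨hnn i j, (apply_le_sum_sum hnn i j).trans_eq (sum_ipfp_two_mul_add_two ha hb hY0' n)⟩
  · obtain ⟨ψ, hψ, hψM⟩ := hM.tendsto_subseq
    exact eq_of_tendsto_ipfp_restrict ha hb hX0 hL hY0 hμ hν hLrow hLcol hLμν
      hψ.tendsto_atTop hψM

end RestrictedStart

section EvenLimit

variable (ha : ∀ i, 0 < a i) (hb : ∀ j, 0 < b j) {X0 : Matrix (Fin p) (Fin q) ℝ}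
  (hX0 : memGamma0 X0) {μ : Fin p → ℝ} (hμ : ∀ i, 0 < μ i)
  (hR : ∀ i, Tendsto (fun n => Rrat a (ipfp a b X0 (2 * n)) i) atTop (𝓝 (μ i)))
  {L : Matrix (Fin p) (Fin q) ℝ} (hL : Tendsto (fun n => ipfp a b X0 (2 * n)) atTop (𝓝 L))
include ha hb hX0 hL

lemma colSum_limit_even (j : Fin q) : colSum L j = b j :=
  colSum_eq_of_tendsto (hL.comp (tendsto_add_atTop_nat 1))
    (Eventually.of_forall fun n => colSum_ipfp_two_mul_add_two ha hb hX0 n j)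

include hμ hR in
lemma memGammaSub_limit_even {a' : Fin p → ℝ} (ha' : ∀ i, a' i = μ i * a i) :
    memGammaSub a' b X0 L := by
  have hrow : ∀ i, rowSum L i = μ i * a i := fun i => rowSum_eq_of_tendsto_Rrat hL (ha i).ne' (hR i)
  refine ⟨⟨⟨nonneg_of_tendsto_ipfp ha hb hX0 hL, fun i => ?_, fun j => ?_⟩, fun i => ?_,
    colSum_limit_even ha hb hX0 hL⟩, suppSubset_of_tendsto_ipfp ha hb hX0 hL⟩
  · rw [hrow]; exact mul_pos (hμ i) (ha i)
  · rw [colSum_limit_even ha hb hX0 hL]; exact hb j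
  · rw [hrow, ha']

end EvenLimit

theorem ipfp_modified_initial_matrix_of_ratios (ha : ∀ i, 0 < a i) (hb : ∀ j, 0 < b j)
    {X0 : Matrix (Fin p) (Fin q) ℝ} (hX0 : memGamma0 X0) {μ : Fin p → ℝ} {ν : Fin q → ℝ}
    (hμ : ∀ i, 0 < μ i) (hν : ∀ j, 0 < ν j)
    (hR : ∀ i, Tendsto (fun n => Rrat a (ipfp a b X0 (2 * n)) i) atTop (𝓝 (μ i)))
    (hC : ∀ j, Tendsto (fun n => Crat b (ipfp a b X0 (2 * n + 1)) j) atTop (𝓝 (ν j)⁻¹))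
    {a' : Fin p → ℝ} (ha' : ∀ i, a' i = μ i * a i)
    {b' : Fin q → ℝ} (hb' : ∀ j, b' j = (ν j)⁻¹ * b j)
    {Leven Lodd : Matrix (Fin p) (Fin q) ℝ}
    (hEven : Tendsto (fun n => ipfp a b X0 (2 * n)) atTop (𝓝 Leven))
    (hOdd : Tendsto (fun n => ipfp a b X0 (2 * n + 1)) atTop (𝓝 Lodd))
    {X0' : Matrix (Fin p) (Fin q) ℝ} (hX0' : ∀ i j, X0' i j = if 0 < Leven i j then X0 i j else 0) :
    (∀ i j, 0 < Leven i j ↔ 0 < Lodd i j) ∧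
    (∀ i j, 0 < Leven i j ↔
      ∃ S : Matrix (Fin p) (Fin q) ℝ,
        (memGammaSub a' b X0 S ∨ memGammaSub a b' X0 S) ∧ 0 < S i j) ∧
    Tendsto (fun n => ipfp a b X0' (2 * n)) atTop (𝓝 Leven) ∧
    Tendsto (fun n => ipfp a b X0' (2 * n + 1)) atTop (𝓝 Lodd) := by
  have hLeven := memGammaSub_limit_even ha hb hX0 hμ hR hEven ha'
  have hLrow : ∀ i, rowSum Leven i = μ i * a i := fun i => by rw [hLeven.1.2.1, ha']
  have hLμν := fun i j (h : 0 < Leven i j) => eq_of_limit_pos hEven hR hμ hν hC h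
  have hLodd : Lodd = fun i j => Leven i j / μ i :=
    tendsto_nhds_unique hOdd (tendsto_ipfp_two_mul_add_one hEven hR hμ)
  have hsupp : ∀ i j, 0 < Leven i j ↔ 0 < Lodd i j := fun i j => by
    rw [hLodd]; exact (div_pos_iff_of_pos_right (hμ i)).symm
  have hY := tendsto_ipfp_restrict ha hb hX0 hEven hX0' hμ hν hLrow hLeven.1.2.2 hLμν
  refine ⟨hsupp, fun i j => ⟨fun h => ⟨Leven, Or.inl hLeven, h⟩, ?_⟩, hY, hLodd ▸
    tendsto_ipfp_two_mul_add_one hY (tendsto_Rrat_ipfp ha hb hLeven.1.1.1 hμ hν hLrow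
      hLeven.1.2.2 hLμν (memGamma0_restrict ha hb hX0 hEven hX0' hμ hLrow hLeven.1.2.2)
      (restrict_pos_iff ha hb hX0 hEven hX0')) hμ⟩
  rintro ⟨S, hS | hS, hSij⟩
  · exact suppSubset_limit_of_marginals ha hb hX0 hS.1.1.1 hLeven.1.1.1 hS.2 hLeven.2
      (fun i => by rw [hS.1.2.1, hLeven.1.2.1]) (fun j => by rw [hS.1.2.2, hLeven.1.2.2])
      hEven (fun _ _ h => h) i j hSij
  · refine suppSubset_limit_of_marginals ha hb hX0 hS.1.1.1 (nonneg_of_tendsto_ipfp ha hb hX0 hOdd)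
      hS.2 (suppSubset_of_tendsto_ipfp ha hb hX0 hOdd) (fun i => ?_) (fun j => ?_) hEven
      (fun i j => (hsupp i j).mpr) i j hSij
    · rw [hS.1.2.1, rowSum_eq_of_tendsto hOdd
        (Eventually.of_forall fun n => rowSum_ipfp_two_mul_add_one ha hb hX0 n i)]
    · rw [hS.1.2.2, colSum_eq_of_tendsto_Crat hOdd (hb j).ne' (hC j), hb']

end IPFP

theorem ipfp_modified_initial_matrix_general
    (p q : ℕ)
    (a : Fin p → ℝ) (b : Fin q → ℝ)
    (ha : ∀ i, 0 < a i) (hb : ∀ j, 0 < b j)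
    (X0 : Matrix (Fin p) (Fin q) ℝ) (hX0 : memGamma1 X0)
    (r : ℕ)
    (I : Fin r → Finset (Fin p)) (J : Fin r → Finset (Fin q))
    (hI : ∀ i : Fin p, ∃! k, i ∈ I k) (hIne : ∀ k, (I k).Nonempty)
    (hJ : ∀ j : Fin q, ∃! k, j ∈ J k) (hJne : ∀ k, (J k).Nonempty)
    (lam : Fin r → ℝ)
    (hlam : ∀ k, lam k = (∑ j ∈ J k, b j) / ∑ i ∈ I k, a i)
    (hR : ∀ k, ∀ i ∈ I k,
      Tendsto (fun n => Rrat a (ipfp a b X0 (2 * n)) i) atTop (nhds (lam k)))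
    (hC : ∀ k, ∀ j ∈ J k,
      Tendsto (fun n => Crat b (ipfp a b X0 (2 * n + 1)) j) atTop (nhds ((lam k)⁻¹)))
    (a' : Fin p → ℝ) (ha' : ∀ k, ∀ i ∈ I k, a' i = lam k * a i)
    (b' : Fin q → ℝ) (hb' : ∀ k, ∀ j ∈ J k, b' j = (lam k)⁻¹ * b j)
    (Leven Lodd : Matrix (Fin p) (Fin q) ℝ)
    (hEven : Tendsto (fun n => ipfp a b X0 (2 * n)) atTop (nhds Leven))
    (hOdd : Tendsto (fun n => ipfp a b X0 (2 * n + 1)) atTop (nhds Lodd))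
    (X0' : Matrix (Fin p) (Fin q) ℝ)
    (hX0' : ∀ i j, X0' i j = if 0 < Leven i j then X0 i j else 0) :
    (∀ i j, 0 < Leven i j ↔ 0 < Lodd i j) ∧
    (∀ i j, 0 < Leven i j ↔
      ∃ S : Matrix (Fin p) (Fin q) ℝ,
        (memGammaSub a' b X0 S ∨ memGammaSub a b' X0 S) ∧ 0 < S i j) ∧
    Tendsto (fun n => ipfp a b X0' (2 * n)) atTop (nhds Leven) ∧
    Tendsto (fun n => ipfp a b X0' (2 * n + 1)) atTop (nhds Lodd) := by
  choose kI hkI using fun i => (hI i).exists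
  choose kJ hkJ using fun j => (hJ j).exists
  have hlam_pos : ∀ k, 0 < lam k := fun k => by
    rw [hlam k]
    exact div_pos (Finset.sum_pos (fun j _ => hb j) (hJne k))
      (Finset.sum_pos (fun i _ => ha i) (hIne k))
  exact ipfp_modified_initial_matrix_of_ratios ha hb hX0.1 (fun i => hlam_pos (kI i))
    (fun j => hlam_pos (kJ j)) (fun i => hR _ i (hkI i)) (fun j => hC _ j (hkJ j))
    (fun i => ha' _ i (hkI i)) (fun j => hb' _ j (hkJ j)) hEven hOdd hX0'

/-- Keep the data of the divergence theorem, with modified marginals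
`a'`, `b'` and limits `L_even = lim X_{2n}`, `L_odd = lim X_{2n+1}`. Then `L_even` and
`L_odd` have the same support `Σ`, which equals the union of the supports of all
matrices in `Γ(a',b,X_0) ∪ Γ(a,b',X_0)`; moreover, if `X'_0` is obtained from `X_0` by
setting to `0` all entries outside `Σ`, the IPFP started from `X'_0` (with marginals
`a` and `b`) has the same limit points `L_even` and `L_odd`. -/
theorem ipfp_modified_initial_matrix
    (p q : ℕ) (hp : 2 ≤ p) (hq : 2 ≤ q)
    (a : Fin p → ℝ) (b : Fin q → ℝ)
    (ha : ∀ i, 0 < a i) (hb : ∀ j, 0 < b j)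
    (hsa : ∑ i, a i = 1) (hsb : ∑ j, b j = 1)
    (X0 : Matrix (Fin p) (Fin q) ℝ) (hX0 : memGamma1 X0)
    (r : ℕ) (hr : 0 < r) (hrpq : r ≤ min p q)
    (I : Fin r → Finset (Fin p)) (J : Fin r → Finset (Fin q))
    (hI : ∀ i : Fin p, ∃! k, i ∈ I k) (hIne : ∀ k, (I k).Nonempty)
    (hJ : ∀ j : Fin q, ∃! k, j ∈ J k) (hJne : ∀ k, (J k).Nonempty)
    (lam : Fin r → ℝ)
    (hlam : ∀ k, lam k = (∑ j ∈ J k, b j) / ∑ i ∈ I k, a i)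
    (hR : ∀ k, ∀ i ∈ I k,
      Tendsto (fun n => Rrat a (ipfp a b X0 (2 * n)) i) atTop (nhds (lam k)))
    (hC : ∀ k, ∀ j ∈ J k,
      Tendsto (fun n => Crat b (ipfp a b X0 (2 * n + 1)) j) atTop (nhds ((lam k)⁻¹)))
    (a' : Fin p → ℝ) (ha' : ∀ k, ∀ i ∈ I k, a' i = lam k * a i)
    (b' : Fin q → ℝ) (hb' : ∀ k, ∀ j ∈ J k, b' j = (lam k)⁻¹ * b j)
    (Leven Lodd : Matrix (Fin p) (Fin q) ℝ)
    (hEven : Tendsto (fun n => ipfp a b X0 (2 * n)) atTop (nhds Leven))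
    (hOdd : Tendsto (fun n => ipfp a b X0 (2 * n + 1)) atTop (nhds Lodd))
    (X0' : Matrix (Fin p) (Fin q) ℝ)
    (hX0' : ∀ i j, X0' i j = if 0 < Leven i j then X0 i j else 0) :
    (∀ i j, 0 < Leven i j ↔ 0 < Lodd i j) ∧
    (∀ i j, 0 < Leven i j ↔
      ∃ S : Matrix (Fin p) (Fin q) ℝ,
        (memGammaSub a' b X0 S ∨ memGammaSub a b' X0 S) ∧ 0 < S i j) ∧
    Tendsto (fun n => ipfp a b X0' (2 * n)) atTop (nhds Leven) ∧
    Tendsto (fun n => ipfp a b X0' (2 * n + 1)) atTop (nhds Lodd) :=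
  ipfp_modified_initial_matrix_general p q a b ha hb X0 hX0 r I J hI hIne hJ hJne lam hlam hR hC a'
    ha' b' hb' Leven Lodd hEven hOdd X0' hX0'
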